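/- Consider an irreducible transient Markov chain, vertices a,b, and g(v) := E_v[ number of visits to b ] (Green's function), with limsup_v g(v) = 0 and K_5 := sup_v g(v) + (1/2)( d(b) + sum_{u,v} d(u)p(u,v)|g(u)-g(v)| ) finite. Then for any transfinite rotor walk started at a and any transfinite time tau = m*omega + t with m >= 1 at which all vertices have been visited finitely often, | g(a) - n_tau(b)/m | <= K_5/m. -/

import Mathlib

open scoped BigOperators Classical

/-- `(x, r)` is a rotor walk for the rotor mechanism `(d, succ)`.  Rotor values are
`0`-based: rotor value `j` at `u` means the rotor points to `succ u j`
(corresponding to `u^(j+1)` in `1`-based notation).  At each step the rotor at the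
current particle position is incremented cyclically and the particle moves in the
new rotor direction. -/
def IsRotorWalk {V : Type*} (d : V → ℕ) (succ : V → ℕ → V)
    (x : ℕ → V) (r : ℕ → V → ℕ) : Prop :=
  (∀ v, r 0 v < d v) ∧
  (∀ t, r (t + 1) (x t) = (r t (x t) + 1) % d (x t)) ∧
  (∀ t v, v ≠ x t → r (t + 1) v = r t v) ∧
  (∀ t, x (t + 1) = succ (x t) (r (t + 1) (x t)))

/-- the number of visits of the walk `x` to `v` strictly before time `t` -/
noncomputable def nvisits {V : Type*} (x : ℕ → V) (t : ℕ) (v : V) : ℕ :=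
  ((Finset.range t).filter fun s => x s = v).card

/-- the rotor mechanism `(d, succ)` realizes the transition kernel `p`:
`p u v` is the proportion of the `d u` successors of `u` equal to `v` -/
def Realizes {V : Type*} (d : V → ℕ) (succ : V → ℕ → V) (p : V → V → ℝ) : Prop :=
  (∀ u, 0 < d u) ∧
  ∀ u v, p u v = ((Finset.range (d u)).filter fun i => succ u i = v).card / d u

/-- `hitAux p b c t v` is the probability, for the Markov chain with kernel `p`
started at `v`, of hitting `b` before hitting `c` and within `t` steps. -/
noncomputable def hitAux {V : Type*} (p : V → V → ℝ) (b c : V) : ℕ → V → ℝ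
  | 0, v => if v = b then 1 else 0
  | t + 1, v => if v = b then 1 else if v = c then 0 else ∑' w, p v w * hitAux p b c t w

/-- the hitting probability `h_{b,c}(v) = P_v(T_b < T_c)`, as the monotone limit of the
probabilities of hitting `b` before `c` within `t` steps.  (Taking `b = c` gives the
single-target hitting probability `P_v(T_b < ∞)`.) -/
noncomputable def hitProb {V : Type*} (p : V → V → ℝ) (b c : V) (v : V) : ℝ :=
  ⨆ t, hitAux p b c t v

/-- the escape probability `e_{u,v} = P_u(T_v < T_u^+)`: a first step from `u` to `w`,
then hit `v` before `u`. -/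
noncomputable def escProb {V : Type*} (p : V → V → ℝ) (u v : V) : ℝ :=
  ∑' w, p u w * hitProb p v u w

/-- irreducibility of the kernel: any vertex can be reached from any other by a path of
positive-probability steps -/
def IrreducibleKernel {V : Type*} (p : V → V → ℝ) : Prop :=
  ∀ u v : V, ∃ (n : ℕ) (f : ℕ → V), f 0 = u ∧ f n = v ∧ ∀ i < n, 0 < p (f i) (f (i + 1))

/-- A transfinite rotor walk started at `a`: a (finite or infinite) sequence of rotor
walks `X m`, each started at `a`; every walk strictly before stage `M` is transient and
the next walk starts from its limiting rotor configuration; if `M` is finite, the walk at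
stage `M` is recurrent (so the transfinite walk stops evolving there). -/
structure TransRW {V : Type*} (d : V → ℕ) (succ : V → ℕ → V) (a : V) where
  M : ℕ∞
  X : ℕ → ℕ → V
  R : ℕ → ℕ → V → ℕ
  walk : ∀ m : ℕ, (m : ℕ∞) ≤ M → IsRotorWalk d succ (X m) (R m) ∧ X m 0 = a
  transient : ∀ m : ℕ, (m : ℕ∞) < M → ∀ v, {t | X m t = v}.Finite
  limit : ∀ m : ℕ, (m : ℕ∞) < M → ∀ v, ∃ T, ∀ t, T ≤ t → R m t v = R (m + 1) 0 v
  last_recurrent : ∀ m : ℕ, (m : ℕ∞) = M → ∀ v, {t | X m t = v}.Infinite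

/-- `ntau W m t v` is the number of visits to `v` before the transfinite time
`τ = m·ω + t`: all visits during the first `m` (completed) walks, plus the visits of the
`m`-th walk before time `t`. -/
noncomputable def ntau {V : Type*} {d : V → ℕ} {succ : V → ℕ → V} {a : V}
    (W : TransRW d succ a) (m t : ℕ) (v : V) : ℕ :=
  (∑ m' ∈ Finset.range m, {s | W.X m' s = v}.ncard) + nvisits (W.X m) t v

/-- `greenAux p b t v` is the expected number of visits to `b` within the first `t` steps
for the chain started at `v`. -/
noncomputable def greenAux {V : Type*} (p : V → V → ℝ) (b : V) : ℕ → V → ℝ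
  | 0, v => if v = b then 1 else 0
  | t + 1, v => (if v = b then 1 else 0) + ∑' w, p v w * greenAux p b t w

/-- the Green function `g(v) = E_v #\{t ≥ 0 : X_t = b\}` -/
noncomputable def green {V : Type*} (p : V → V → ℝ) (b : V) (v : V) : ℝ :=
  ⨆ t, greenAux p b t v

/-- transience: `P_v(T_v^+ < ∞) < 1` for every `v` -/
def TransientKernel {V : Type*} (p : V → V → ℝ) : Prop :=
  ∀ v : V, ∑' w, p v w * hitProb p v v w < 1


/-!
Along a rotor walk, `g(X_t) - g(X_0)` telescopes into a sum over the vertices `u` of the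
increments `g(u^j) - g(u)` along the consecutive rotor directions used at `u`. Adding `1` to the
increments at `b` makes them sum to zero over a full rotor cycle at every vertex (`Δg = -δ_b`),
so every vertex contributes at most half of `∑_j |g(u^j) - g(u) + δ_{ub}|`, whatever the number of
visits, while the corrections add up to the number of visits to `b`. Each completed stage of the
transfinite walk ends at infinity, where `g` vanishes; by dominated convergence the stages
concatenate to `∑_u (…) = g(X_τ) - (m + 1) g(a) + n_τ(b)`, and the bound follows with
`|g(X_τ) - g(a)| ≤ sup g`.
-/

open Finset Filter Topology

namespace Realizes

variable {V : Type*} {d : V → ℕ} {succ : V → ℕ → V} {p : V → V → ℝ}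

lemma tsum_mul_eq (hreal : Realizes d succ p) (u : V) (f : V → ℝ) :
    ∑' w, p u w * f w = (∑ i ∈ range (d u), f (succ u i)) / d u := by
  have hsupp : ∀ w ∉ (range (d u)).image (succ u), p u w * f w = 0 := by
    intro w hw
    have hempty : (range (d u)).filter (fun i => succ u i = w) = ∅ :=
      filter_eq_empty_iff.2 fun i hi hiw => hw (mem_image.2 ⟨i, hi, hiw⟩)
    rw [hreal.2, hempty]; simp
  rw [tsum_eq_sum hsupp, sum_comp f (succ u), sum_div]
  refine sum_congr rfl fun w _ => ?_
  rw [hreal.2, nsmul_eq_mul]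
  ring

lemma tsum_mul_le (hreal : Realizes d succ p) (u : V) {f : V → ℝ} {c : ℝ} (hf : ∀ w, f w ≤ c) :
    ∑' w, p u w * f w ≤ c := by
  have hd : (0 : ℝ) < d u := by exact_mod_cast hreal.1 u
  rw [tsum_mul_eq hreal, div_le_iff₀ hd]
  calc ∑ i ∈ range (d u), f (succ u i) ≤ ∑ _i ∈ range (d u), c := sum_le_sum fun i _ => hf _
    _ = c * d u := by rw [sum_const, card_range, nsmul_eq_mul, mul_comm]

lemma le_tsum_mul (hreal : Realizes d succ p) (u : V) {f : V → ℝ} {c : ℝ} (hf : ∀ w, c ≤ f w) :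
    c ≤ ∑' w, p u w * f w := by
  have hd : (0 : ℝ) < d u := by exact_mod_cast hreal.1 u
  rw [tsum_mul_eq hreal, le_div_iff₀ hd]
  calc c * d u = ∑ _i ∈ range (d u), c := by rw [sum_const, card_range, nsmul_eq_mul, mul_comm]
    _ ≤ ∑ i ∈ range (d u), f (succ u i) := sum_le_sum fun i _ => hf _

lemma tsum_mul_mono (hreal : Realizes d succ p) (u : V) {f f' : V → ℝ} (hf : ∀ w, f w ≤ f' w) :
    ∑' w, p u w * f w ≤ ∑' w, p u w * f' w := by
  rw [tsum_mul_eq hreal, tsum_mul_eq hreal]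
  gcongr with i
  exact hf _

lemma hasSum_sum_abs_sub (hreal : Realizes d succ p) {g : V → ℝ}
    (hsum : Summable fun uv : V × V => (d uv.1 : ℝ) * p uv.1 uv.2 * |g uv.1 - g uv.2|) :
    HasSum (fun u => ∑ j ∈ range (d u), |g (succ u j) - g u|)
      (∑' uv : V × V, (d uv.1 : ℝ) * p uv.1 uv.2 * |g uv.1 - g uv.2|) := by
  refine hsum.hasSum.prod_fiberwise fun u => ?_
  have hd : (d u : ℝ) ≠ 0 := by exact_mod_cast (hreal.1 u).ne'
  have hfiber :
      ∑' v, (d u : ℝ) * p u v * |g u - g v| = ∑ j ∈ range (d u), |g (succ u j) - g u| := by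
    simp_rw [mul_assoc, tsum_mul_left, tsum_mul_eq hreal, mul_div_cancel₀ _ hd, abs_sub_comm]
  simpa only [hfiber] using (hsum.prod_factor u).hasSum

end Realizes

section Green

variable {V : Type*} {d : V → ℕ} {succ : V → ℕ → V} {p : V → V → ℝ}

lemma hitAux_mem_Icc (hreal : Realizes d succ p) (b c : V) (t : ℕ) (v : V) :
    hitAux p b c t v ∈ Set.Icc 0 1 := by
  induction t generalizing v with
  | zero => unfold hitAux; split_ifs <;> norm_num
  | succ t ih =>
    unfold hitAux
    split_ifs
    · norm_num
    · norm_num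
    · exact ⟨hreal.le_tsum_mul v fun w => (ih w).1, hreal.tsum_mul_le v fun w => (ih w).2⟩

lemma hitAux_le_hitProb (hreal : Realizes d succ p) (b c : V) (t : ℕ) (v : V) :
    hitAux p b c t v ≤ hitProb p b c v :=
  le_ciSup (f := fun t => hitAux p b c t v)
    ⟨1, by rintro _ ⟨s, rfl⟩; exact (hitAux_mem_Icc hreal b c s v).2⟩ t

/-- `(1 - ρ)⁻¹`, with `ρ = P_b(T_b^+ < ∞)`, is the expected number of visits to `b` from `b`:
each further return costs a factor `ρ`. -/
lemma greenAux_le_hitAux_mul (hreal : Realizes d succ p) (htrans : TransientKernel p) (b : V)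
    (t : ℕ) (v : V) :
    greenAux p b t v ≤ hitAux p b b t v * (1 - ∑' w, p b w * hitProb p b b w)⁻¹ := by
  set ρ := ∑' w, p b w * hitProb p b b w
  have hρ : 0 ≤ ρ := hreal.le_tsum_mul b fun w =>
    (hitAux_mem_Icc hreal b b 0 w).1.trans (hitAux_le_hitProb hreal b b 0 w)
  have hC : 0 ≤ (1 - ρ)⁻¹ := inv_nonneg.2 (by linarith [htrans b])
  have hρC : 1 + ρ * (1 - ρ)⁻¹ = (1 - ρ)⁻¹ := by
    field_simp [(by linarith [htrans b] : (1 - ρ) ≠ 0)]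
    ring
  induction t generalizing v with
  | zero =>
    unfold greenAux hitAux
    split_ifs
    · linarith [mul_nonneg hρ hC]
    · simp
  | succ t ih =>
    have hstep : ∑' w, p v w * greenAux p b t w ≤
        ∑' w, p v w * hitAux p b b t w * (1 - ρ)⁻¹ := by
      simp_rw [mul_assoc]
      exact hreal.tsum_mul_mono v ih
    unfold greenAux hitAux
    by_cases hvb : v = b
    · subst hvb
      have hret : ∑' w, p v w * hitAux p v v t w * (1 - ρ)⁻¹ ≤ ρ * (1 - ρ)⁻¹ := by
        rw [tsum_mul_right]
        exact mul_le_mul_of_nonneg_right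
          (hreal.tsum_mul_mono v fun w => hitAux_le_hitProb hreal v v t w) hC
      simp only [if_true, one_mul]
      linarith
    · simp only [hvb, if_false, zero_add, ← tsum_mul_right]
      exact hstep

lemma greenAux_le (hreal : Realizes d succ p) (htrans : TransientKernel p) (b : V) (t : ℕ)
    (v : V) : greenAux p b t v ≤ (1 - ∑' w, p b w * hitProb p b b w)⁻¹ := by
  refine (greenAux_le_hitAux_mul hreal htrans b t v).trans ?_
  refine mul_le_of_le_one_left (inv_nonneg.2 ?_) (hitAux_mem_Icc hreal b b t v).2
  linarith [htrans b]

lemma greenAux_zero_nonneg (b v : V) : 0 ≤ greenAux p b 0 v := by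
  rw [greenAux.eq_1]; split_ifs <;> norm_num

lemma greenAux_mono (hreal : Realizes d succ p) (b : V) (t : ℕ) (v : V) :
    greenAux p b t v ≤ greenAux p b (t + 1) v := by
  induction t generalizing v with
  | zero =>
    have h0 : 0 ≤ ∑' w, p v w * greenAux p b 0 w :=
      hreal.le_tsum_mul v fun w => greenAux_zero_nonneg b w
    rw [greenAux.eq_2, greenAux.eq_1 p b v]
    linarith
  | succ t ih =>
    rw [greenAux, greenAux]
    exact add_le_add le_rfl (hreal.tsum_mul_mono v ih)

lemma tendsto_greenAux (hreal : Realizes d succ p) (htrans : TransientKernel p) (b v : V) :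
    Tendsto (fun t => greenAux p b t v) atTop (𝓝 (green p b v)) :=
  tendsto_atTop_ciSup (monotone_nat_of_le_succ fun t => greenAux_mono hreal b t v)
    ⟨_, by rintro _ ⟨t, rfl⟩; exact greenAux_le hreal htrans b t v⟩

lemma green_nonneg (hreal : Realizes d succ p) (htrans : TransientKernel p) (b v : V) :
    0 ≤ green p b v :=
  ge_of_tendsto' (tendsto_greenAux hreal htrans b v) fun t => (greenAux_zero_nonneg b v).trans
    (monotone_nat_of_le_succ (fun t => greenAux_mono hreal b t v) (Nat.zero_le t))

lemma green_eq (hreal : Realizes d succ p) (htrans : TransientKernel p) (b v : V) :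
    green p b v = (if v = b then 1 else 0) + (∑ i ∈ range (d v), green p b (succ v i)) / d v := by
  refine tendsto_nhds_unique ((tendsto_greenAux hreal htrans b v).comp (tendsto_add_atTop_nat 1)) ?_
  simp only [Function.comp_def, greenAux, Realizes.tsum_mul_eq hreal]
  exact ((tendsto_finsetSum _ fun i _ =>
    tendsto_greenAux hreal htrans b (succ v i)).div_const _).const_add _

noncomputable def rotorIncr (succ : V → ℕ → V) (g : V → ℝ) (b u : V) (j : ℕ) : ℝ :=
  g (succ u j) - g u + if u = b then 1 else 0

lemma sum_rotorIncr_green (hreal : Realizes d succ p) (htrans : TransientKernel p) (b u : V) :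
    ∑ j ∈ range (d u), rotorIncr succ (green p b) b u j = 0 := by
  have hd : (d u : ℝ) ≠ 0 := by exact_mod_cast (hreal.1 u).ne'
  simp only [rotorIncr, sum_add_distrib, sum_sub_distrib, sum_const, card_range, nsmul_eq_mul]
  rw [green_eq hreal htrans b u]
  field_simp
  ring

lemma sum_abs_rotorIncr_le (g : V → ℝ) (b u : V) :
    ∑ j ∈ range (d u), |rotorIncr succ g b u j| ≤
      ∑ j ∈ range (d u), |g (succ u j) - g u| + if u = b then (d b : ℝ) else 0 := by
  calc ∑ j ∈ range (d u), |rotorIncr succ g b u j|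
      ≤ ∑ j ∈ range (d u), (|g (succ u j) - g u| + if u = b then 1 else 0) :=
        sum_le_sum fun j _ => (abs_add_le _ _).trans (by split_ifs <;> simp)
    _ = _ := by rw [sum_add_distrib]; split_ifs with hu <;> simp [hu]

end Green

lemma Function.Periodic.sum_range_shift {M : Type*} [AddCommGroup M] {f : ℕ → M} {n : ℕ}
    (hf : Function.Periodic f n) (c : ℕ) : ∑ k ∈ range n, f (c + k) = ∑ k ∈ range n, f k := by
  induction c with
  | zero => simp
  | succ c ih =>
    have hshift := sum_range_succ (fun k => f (c + k)) n
    rw [sum_range_succ', add_zero, hf c, ih, add_left_inj] at hshift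
    simpa only [add_right_comm c 1, ← add_assoc] using hshift

lemma Function.Periodic.sum_range_mod {M : Type*} [AddCommGroup M] {f : ℕ → M} {n : ℕ}
    (hf : Function.Periodic f n) (h0 : ∑ k ∈ range n, f k = 0) (N : ℕ) :
    ∑ k ∈ range (N % n), f k = ∑ k ∈ range N, f k := by
  have hperiod : ∀ N, ∑ k ∈ range (N + n), f k = ∑ k ∈ range N, f k := fun N => by
    rw [Finset.sum_range_add, hf.sum_range_shift, h0, add_zero]
  conv_rhs => rw [← Nat.mod_add_div N n]
  induction N / n with
  | zero => simp
  | succ q ih => rw [Nat.mul_succ, ← add_assoc, hperiod, ih]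

/-- The initial segment and the rest of the period have opposite sums. -/
lemma Function.Periodic.abs_sum_range_le {f : ℕ → ℝ} {n : ℕ} (hf : Function.Periodic f n)
    (hn : 0 < n) (h0 : ∑ k ∈ range n, f k = 0) (N : ℕ) :
    |∑ k ∈ range N, f k| ≤ (∑ k ∈ range n, |f k|) / 2 := by
  rw [← hf.sum_range_mod h0]
  set s := N % n
  obtain ⟨r, hr⟩ : ∃ r, n = s + r := ⟨n - s, by have := Nat.mod_lt N hn; omega⟩
  rw [hr, Finset.sum_range_add] at h0 ⊢
  have hhead : |∑ k ∈ range s, f k| ≤ ∑ k ∈ range s, |f k| := abs_sum_le_sum_abs _ _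
  have htail : |∑ k ∈ range s, f k| ≤ ∑ k ∈ range r, |f (s + k)| := by
    rw [eq_neg_of_add_eq_zero_left h0, abs_neg]
    exact abs_sum_le_sum_abs _ _
  linarith

noncomputable def cyclicSum (n : ℕ) (h : ℕ → ℝ) (c N : ℕ) : ℝ :=
  ∑ k ∈ range N, h ((c + k) % n)

lemma cyclicSum_zero (n : ℕ) (h : ℕ → ℝ) (c : ℕ) : cyclicSum n h c 0 = 0 := by
  simp [cyclicSum]

lemma cyclicSum_add (n : ℕ) (h : ℕ → ℝ) (c N₁ N₂ : ℕ) :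
    cyclicSum n h c (N₁ + N₂) = cyclicSum n h c N₁ + cyclicSum n h (c + N₁) N₂ := by
  simp only [cyclicSum, sum_range_add, add_assoc]

lemma cyclicSum_congr {n : ℕ} (h : ℕ → ℝ) {c c' : ℕ} (hc : c ≡ c' [MOD n]) (N : ℕ) :
    cyclicSum n h c N = cyclicSum n h c' N :=
  sum_congr rfl fun k _ => congrArg h (hc.add_right k)

lemma abs_cyclicSum_le {n : ℕ} {h : ℕ → ℝ} (hn : 0 < n) (h0 : ∑ j ∈ range n, h j = 0)
    (c N : ℕ) : |cyclicSum n h c N| ≤ (∑ j ∈ range n, |h j|) / 2 := by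
  have hwindow : ∀ φ : ℕ → ℝ, ∑ k ∈ range n, φ ((c + k) % n) = ∑ j ∈ range n, φ j := fun φ => by
    have hφ : Function.Periodic (fun k => φ (k % n)) n := fun k => by simp
    refine (hφ.sum_range_shift c).trans (sum_congr rfl fun j hj => ?_)
    rw [Nat.mod_eq_of_lt (mem_range.1 hj)]
  have hper : Function.Periodic (fun k => h ((c + k) % n)) n := fun k => by
    simp [← add_assoc, Nat.add_mod_right]
  have := hper.abs_sum_range_le hn (by rw [hwindow h, h0]) N
  rwa [hwindow fun j => |h j|] at this

section

variable {V : Type*} {d : V → ℕ} {h : V → ℕ → ℝ}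

lemma summable_cyclicSum (hd : ∀ u, 0 < d u) (h0 : ∀ u, ∑ j ∈ range (d u), h u j = 0)
    (hB : Summable fun u => ∑ j ∈ range (d u), |h u j|) (c N : V → ℕ) :
    Summable fun u => cyclicSum (d u) (h u) (c u) (N u) :=
  (hB.div_const 2).of_norm_bounded fun u =>
    (Real.norm_eq_abs _).trans_le (abs_cyclicSum_le (hd u) (h0 u) _ _)

lemma abs_tsum_cyclicSum_le (hd : ∀ u, 0 < d u) (h0 : ∀ u, ∑ j ∈ range (d u), h u j = 0)
    (hB : Summable fun u => ∑ j ∈ range (d u), |h u j|) (c N : V → ℕ) :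
    |∑' u, cyclicSum (d u) (h u) (c u) (N u)| ≤ (∑' u, ∑ j ∈ range (d u), |h u j|) / 2 := by
  rw [← tsum_div_const]
  exact tsum_of_norm_bounded (hB.div_const 2).hasSum fun u =>
    (Real.norm_eq_abs _).trans_le (abs_cyclicSum_le (hd u) (h0 u) _ _)

end

section RotorWalk

variable {V : Type*} {d : V → ℕ} {succ : V → ℕ → V}

lemma nvisits_zero (x : ℕ → V) (v : V) : nvisits x 0 v = 0 := by
  simp [nvisits]

lemma nvisits_succ (x : ℕ → V) (t : ℕ) (v : V) :
    nvisits x (t + 1) v = nvisits x t v + if x t = v then 1 else 0 := by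
  simp only [nvisits, card_filter, sum_range_succ]

lemma nvisits_eq_zero_of_notMem {x : ℕ → V} {n : ℕ} {u : V} (hu : u ∉ (range n).image x) :
    nvisits x n u = 0 :=
  card_eq_zero.2 (filter_eq_empty_iff.2 fun s hs hsu => hu (mem_image.2 ⟨s, hs, hsu⟩))

lemma eventually_nvisits_eq_ncard {x : ℕ → V} {v : V} (hfin : {t | x t = v}.Finite) :
    ∀ᶠ n in atTop, nvisits x n v = {t | x t = v}.ncard := by
  obtain ⟨T, hT⟩ := hfin.bddAbove
  filter_upwards [eventually_gt_atTop T] with n hn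
  rw [Set.ncard_eq_toFinset_card _ hfin, nvisits]
  congr 1
  ext s
  simp only [mem_filter, mem_range, Set.Finite.mem_toFinset, Set.mem_ofPred_eq,
    and_iff_right_iff_imp]
  exact fun hs => (hT hs).trans_lt hn

lemma summable_cyclicSum_nvisits (x : ℕ → V) (h : V → ℕ → ℝ) (c : V → ℕ) (n : ℕ) :
    Summable fun u => cyclicSum (d u) (h u) (c u) (nvisits x n u) :=
  summable_of_ne_finset_zero (s := (range n).image x) fun u hu => by
    rw [nvisits_eq_zero_of_notMem hu, cyclicSum_zero]

namespace IsRotorWalk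

variable {x : ℕ → V} {r : ℕ → V → ℕ}

lemma rotor_eq (hw : IsRotorWalk d succ x r) (t : ℕ) (v : V) :
    r t v = (r 0 v + nvisits x t v) % d v := by
  induction t with
  | zero => rw [nvisits_zero, add_zero, Nat.mod_eq_of_lt (hw.1 v)]
  | succ t ih =>
    rw [nvisits_succ]
    by_cases hv : x t = v
    · subst hv
      rw [hw.2.1 t, ih, if_pos rfl, Nat.mod_add_mod, add_assoc]
    · rw [hw.2.2.1 t v (Ne.symm hv), ih, if_neg hv, add_zero]

lemma succ_eq (hw : IsRotorWalk d succ x r) (t : ℕ) :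
    x (t + 1) = succ (x t) ((r 0 (x t) + 1 + nvisits x t (x t)) % d (x t)) := by
  rw [hw.2.2.2 t, hw.2.1 t, hw.rotor_eq, Nat.mod_add_mod, add_right_comm]

/-- Telescoping along the walk: the `k`-th visit to `u` moves the particle to `u`'s rotor
direction number `r 0 u + 1 + k`. -/
theorem tsum_cyclicSum_rotorIncr (hw : IsRotorWalk d succ x r) (g : V → ℝ) (b : V) (n : ℕ) :
    ∑' u, cyclicSum (d u) (rotorIncr succ g b u) (r 0 u + 1) (nvisits x n u) =
      g (x n) - g (x 0) + nvisits x n b := by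
  induction n with
  | zero => simp [nvisits_zero, cyclicSum_zero]
  | succ n ih =>
    have hstep : ∀ u, cyclicSum (d u) (rotorIncr succ g b u) (r 0 u + 1) (nvisits x (n + 1) u) =
        cyclicSum (d u) (rotorIncr succ g b u) (r 0 u + 1) (nvisits x n u) +
          if u = x n then g (x (n + 1)) - g (x n) + (if x n = b then 1 else 0) else 0 := by
      intro u
      rw [nvisits_succ]
      by_cases hu : x n = u
      · subst hu
        rw [if_pos rfl, if_pos rfl, cyclicSum_add, hw.succ_eq n]
        simp [cyclicSum, rotorIncr]
      · rw [if_neg hu, if_neg (Ne.symm hu), add_zero, add_zero]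
    rw [tsum_congr hstep, Summable.tsum_add (summable_cyclicSum_nvisits x _ _ n)
      (hasSum_ite_eq _ _).summable, tsum_ite_eq, ih, nvisits_succ]
    push_cast
    ring

end IsRotorWalk

end RotorWalk

namespace TransRW

variable {V : Type*} {d : V → ℕ} {succ : V → ℕ → V} {a : V} (W : TransRW d succ a)

lemma ntau_eq_add (m t : ℕ) (u : V) : ntau W m t u = ntau W m 0 u + nvisits (W.X m) t u := by
  simp [ntau, nvisits_zero]

lemma ntau_succ_zero (m : ℕ) (u : V) :
    ntau W (m + 1) 0 u = ntau W m 0 u + {s | W.X m s = u}.ncard := by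
  simp [ntau, nvisits_zero, sum_range_succ]

lemma eventually_ntau_eq {m : ℕ} (hm : (m : ℕ∞) < W.M) (u : V) :
    ∀ᶠ t in atTop, ntau W m t u = ntau W (m + 1) 0 u := by
  filter_upwards [eventually_nvisits_eq_ncard (W.transient m hm u)] with t ht
  rw [ntau_eq_add, ht, ntau_succ_zero]

lemma tendsto_X {m : ℕ} (hm : (m : ℕ∞) < W.M) : Tendsto (W.X m) atTop cofinite :=
  Nat.cofinite_eq_atTop ▸ Tendsto.cofinite_of_finite_preimage_singleton fun v =>
    (W.transient m hm v).to_subtype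

lemma rotor_succ_zero_modEq {i : ℕ} (hi : (i : ℕ∞) < W.M) (u : V) :
    W.R (i + 1) 0 u ≡ W.R i 0 u + {s | W.X i s = u}.ncard [MOD d u] := by
  obtain ⟨T, hT⟩ := W.limit i hi u
  obtain ⟨t, ht, hvis⟩ :=
    ((eventually_ge_atTop T).and (eventually_nvisits_eq_ncard (W.transient i hi u))).exists
  rw [← hT t ht, (W.walk i hi.le).1.rotor_eq, hvis]
  exact Nat.mod_modEq _ _

lemma rotor_zero_modEq {i : ℕ} (hi : (i : ℕ∞) ≤ W.M) (u : V) :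
    W.R i 0 u ≡ W.R 0 0 u + ntau W i 0 u [MOD d u] := by
  induction i with
  | zero => simp [ntau, nvisits_zero]; rfl
  | succ i ih =>
    have hlt : (i : ℕ∞) < W.M := lt_of_lt_of_le (by exact_mod_cast i.lt_succ_self) hi
    rw [ntau_succ_zero, ← add_assoc]
    exact (W.rotor_succ_zero_modEq hlt u).trans ((ih hlt.le).add_right _)

lemma cyclicSum_ntau {i : ℕ} (hi : (i : ℕ∞) ≤ W.M) (h : ℕ → ℝ) (t : ℕ) (u : V) :
    cyclicSum (d u) h (W.R 0 0 u + 1) (ntau W i t u) =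
      cyclicSum (d u) h (W.R 0 0 u + 1) (ntau W i 0 u) +
        cyclicSum (d u) h (W.R i 0 u + 1) (nvisits (W.X i) t u) := by
  rw [ntau_eq_add, cyclicSum_add, add_right_comm]
  exact congrArg _ (cyclicSum_congr h ((W.rotor_zero_modEq hi u).add_right 1).symm _)

/-- Let `t → ∞` in stage `m`: the particle escapes to infinity, where `g` vanishes, and the cycle
sums converge by dominated convergence. -/
lemma tsum_cyclicSum_ntau_succ_zero {g : V → ℝ} {b : V} (hd : ∀ u, 0 < d u)
    (hΔ : ∀ u, ∑ j ∈ range (d u), rotorIncr succ g b u j = 0)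
    (hlim : Tendsto g cofinite (𝓝 0))
    (hB : Summable fun u => ∑ j ∈ range (d u), |rotorIncr succ g b u j|)
    {m : ℕ} (hm : (m : ℕ∞) < W.M)
    (ih : ∀ t, ∑' u, cyclicSum (d u) (rotorIncr succ g b u) (W.R 0 0 u + 1) (ntau W m t u) =
      g (W.X m t) - (m + 1) * g a + ntau W m t b) :
    ∑' u, cyclicSum (d u) (rotorIncr succ g b u) (W.R 0 0 u + 1) (ntau W (m + 1) 0 u) =
      -((m + 1) * g a) + ntau W (m + 1) 0 b := by
  have hlhs : Tendsto (fun t =>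
      ∑' u, cyclicSum (d u) (rotorIncr succ g b u) (W.R 0 0 u + 1) (ntau W m t u)) atTop
      (𝓝 (∑' u, cyclicSum (d u) (rotorIncr succ g b u) (W.R 0 0 u + 1) (ntau W (m + 1) 0 u))) :=
    tendsto_tsum_of_dominated_convergence (hB.div_const 2)
      (fun u => tendsto_const_nhds.congr' <|
        (W.eventually_ntau_eq hm u).mono fun t ht => by simp only [ht])
      (Eventually.of_forall fun t u =>
        (Real.norm_eq_abs _).trans_le (abs_cyclicSum_le (hd u) (hΔ u) _ _))
  have hrhs : Tendsto (fun t => g (W.X m t) - (m + 1) * g a + ntau W m t b) atTop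
      (𝓝 (0 - (m + 1) * g a + ntau W (m + 1) 0 b)) :=
    ((hlim.comp (W.tendsto_X hm)).sub_const _).add <| tendsto_const_nhds.congr' <|
      (W.eventually_ntau_eq hm b).mono fun t ht => by simp only [ht]
  rw [tendsto_nhds_unique hlhs (hrhs.congr fun t => (ih t).symm), zero_sub]

theorem tsum_cyclicSum_ntau {g : V → ℝ} {b : V} (hd : ∀ u, 0 < d u)
    (hΔ : ∀ u, ∑ j ∈ range (d u), rotorIncr succ g b u j = 0)
    (hlim : Tendsto g cofinite (𝓝 0))
    (hB : Summable fun u => ∑ j ∈ range (d u), |rotorIncr succ g b u j|)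
    {m : ℕ} (hm : (m : ℕ∞) ≤ W.M) (t : ℕ) :
    ∑' u, cyclicSum (d u) (rotorIncr succ g b u) (W.R 0 0 u + 1) (ntau W m t u) =
      g (W.X m t) - (m + 1) * g a + ntau W m t b := by
  induction m generalizing t with
  | zero =>
    have hw := W.walk 0 hm
    simpa [ntau, hw.2] using hw.1.tsum_cyclicSum_rotorIncr g b t
  | succ m ih =>
    have hlt : (m : ℕ∞) < W.M := lt_of_lt_of_le (by exact_mod_cast m.lt_succ_self) hm
    have hw := W.walk (m + 1) hm
    rw [tsum_congr fun u => W.cyclicSum_ntau hm (rotorIncr succ g b u) t u,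
      Summable.tsum_add (summable_cyclicSum hd hΔ hB _ _) (summable_cyclicSum_nvisits _ _ _ t),
      W.tsum_cyclicSum_ntau_succ_zero hd hΔ hlim hB hlt fun t => ih hlt.le t,
      hw.1.tsum_cyclicSum_rotorIncr, hw.2, W.ntau_eq_add (m + 1) t b]
    push_cast
    ring

theorem abs_mul_sub_ntau_le {g : V → ℝ} {b : V} (hd : ∀ u, 0 < d u)
    (hΔ : ∀ u, ∑ j ∈ range (d u), rotorIncr succ g b u j = 0)
    (hlim : Tendsto g cofinite (𝓝 0))
    (hB : Summable fun u => ∑ j ∈ range (d u), |rotorIncr succ g b u j|)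
    {m : ℕ} (hm : (m : ℕ∞) ≤ W.M) (t : ℕ) :
    |m * g a - ntau W m t b| ≤
      |g (W.X m t) - g a| + (∑' u, ∑ j ∈ range (d u), |rotorIncr succ g b u j|) / 2 := by
  have hcycles := abs_tsum_cyclicSum_le hd hΔ hB (fun u => W.R 0 0 u + 1) (ntau W m t)
  rw [W.tsum_cyclicSum_ntau hd hΔ hlim hB hm t] at hcycles
  calc |m * g a - ntau W m t b|
      = |(g (W.X m t) - g a) - (g (W.X m t) - (m + 1) * g a + ntau W m t b)| := by
        congr 1; ring
    _ ≤ |g (W.X m t) - g a| + |g (W.X m t) - (m + 1) * g a + ntau W m t b| := abs_sub _ _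
    _ ≤ _ := add_le_add le_rfl hcycles

end TransRW

theorem transfinite_number_of_visits_general {V : Type*}
    (d : V → ℕ) (succ : V → ℕ → V) (p : V → V → ℝ)
    (hreal : Realizes d succ p)
    (htrans : TransientKernel p)
    (a b : V)
    (g : V → ℝ) (hg : g = green p b)
    (hlim : Filter.Tendsto g Filter.cofinite (nhds 0))
    (hbdd : BddAbove (Set.range g))
    (K₅ : ℝ)
    (hsum : Summable fun uv : V × V =>
      (d uv.1 : ℝ) * p uv.1 uv.2 * |g uv.1 - g uv.2|)
    (hK₅ : K₅ = (⨆ v, g v) + (1 / 2) * ((d b : ℝ) +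
      ∑' uv : V × V, (d uv.1 : ℝ) * p uv.1 uv.2 * |g uv.1 - g uv.2|))
    (W : TransRW d succ a)
    (m t : ℕ) (hm1 : 1 ≤ m) (hm : (m : ℕ∞) ≤ W.M) :
    |g a - (ntau W m t b : ℝ) / (m : ℝ)| ≤ K₅ / (m : ℝ) := by
  subst hg
  have hbound := (hreal.hasSum_sum_abs_sub hsum).add (hasSum_ite_eq b (d b : ℝ))
  have hB : Summable fun u => ∑ j ∈ range (d u), |rotorIncr succ (green p b) b u j| :=
    hbound.summable.of_nonneg_of_le (fun u => sum_nonneg fun j _ => abs_nonneg _)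
      (sum_abs_rotorIncr_le _ b)
  have hBle := hasSum_le (sum_abs_rotorIncr_le _ b) hB.hasSum hbound
  have hosc : |green p b (W.X m t) - green p b a| ≤ ⨆ v, green p b v :=
    abs_sub_le_of_nonneg_of_le (green_nonneg hreal htrans b _) (le_ciSup hbdd _)
      (green_nonneg hreal htrans b _) (le_ciSup hbdd _)
  have hkey := W.abs_mul_sub_ntau_le hreal.1 (sum_rotorIncr_green hreal htrans b) hlim hB hm t
  have hm0 : (0 : ℝ) < m := by exact_mod_cast hm1
  rw [show green p b a - ntau W m t b / m = (m * green p b a - ntau W m t b) / m by field_simp,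
    abs_div, abs_of_pos hm0, hK₅]
  gcongr
  linarith

/-- **Transfinite walks and number of visits** (Theorem `num-vis-tf`). -/
theorem transfinite_number_of_visits {V : Type*} [Countable V]
    (d : V → ℕ) (succ : V → ℕ → V) (p : V → V → ℝ)
    (hreal : Realizes d succ p) (hirr : IrreducibleKernel p)
    (htrans : TransientKernel p)
    (a b : V)
    (g : V → ℝ) (hg : g = green p b)
    (hlim : Filter.Tendsto g Filter.cofinite (nhds 0))
    (hbdd : BddAbove (Set.range g))
    (K₅ : ℝ)
    (hsum : Summable fun uv : V × V =>
      (d uv.1 : ℝ) * p uv.1 uv.2 * |g uv.1 - g uv.2|)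
    (hK₅ : K₅ = (⨆ v, g v) + (1 / 2) * ((d b : ℝ) +
      ∑' uv : V × V, (d uv.1 : ℝ) * p uv.1 uv.2 * |g uv.1 - g uv.2|))
    (W : TransRW d succ a)
    (m t : ℕ) (hm1 : 1 ≤ m) (hm : (m : ℕ∞) ≤ W.M) :
    |g a - (ntau W m t b : ℝ) / (m : ℝ)| ≤ K₅ / (m : ℝ) :=
  transfinite_number_of_visits_general d succ p hreal htrans a b g hg hlim hbdd K₅ hsum hK₅ W m t
    hm1 hm
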